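/- Let X be an A–B imprimitivity bimodule, let π ∈ B̂, and let (π_α) be a net in B̂ such that π is a cluster point of (π_α). Then M_L(π,(π_α)) = M_L(X-Ind π, (X-Ind π_α)). -/
import Mathlib


noncomputable section

open scoped ComplexInnerProductSpace ENNReal

/-- A bundled complex Hilbert space. -/
structure HilbertBundle : Type 1 where
  carrier : Type
  [nacg : NormedAddCommGroup carrier]
  [ips : InnerProductSpace ℂ carrier]
  [cs : CompleteSpace carrier]

attribute [instance] HilbertBundle.nacg HilbertBundle.ips HilbertBundle.cs

/-- A representation of a (possibly non-unital) C⋆-algebra on a Hilbert space, i.e. a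
⋆-homomorphism into the bounded operators. -/
structure CStarRep (B : Type) [NonUnitalCStarAlgebra B] : Type 1 where
  space : HilbertBundle
  π : B →⋆ₙₐ[ℂ] (space.carrier →L[ℂ] space.carrier)

/-- An `A`–`B` imprimitivity bimodule: a complex vector space `X` which is a full left Hilbert
`A`-module and a full right Hilbert `B`-module, with commuting actions, satisfying
`⟨x,y⟩_A ⬝ z = x ⬝ ⟨y,z⟩_B`.  The `A`-valued inner product is linear in the first variable and
the `B`-valued one in the second.  `X` is complete for the norm `‖x‖ = ‖⟨x,x⟩_B‖^{1/2}`
(which coincides with `‖⟨x,x⟩_A‖^{1/2}`). -/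
structure ImprimitivityBimodule (A B : Type) [NonUnitalCStarAlgebra A]
    [NonUnitalCStarAlgebra B] : Type 1 where
  X : Type
  [nacg : NormedAddCommGroup X]
  [nsp : NormedSpace ℂ X]
  [cs : CompleteSpace X]
  smulA : A → X → X
  smulB : X → B → X
  innA : X → X → A
  innB : X → X → B
  -- `X` is a left `A`-module
  smulA_add : ∀ a x y, smulA a (x + y) = smulA a x + smulA a y
  add_smulA : ∀ a a' x, smulA (a + a') x = smulA a x + smulA a' x
  mul_smulA : ∀ a a' x, smulA (a * a') x = smulA a (smulA a' x)
  smulA_smul : ∀ (c : ℂ) a x, smulA (c • a) x = c • smulA a x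
  smulA_smul' : ∀ (c : ℂ) a x, smulA a (c • x) = c • smulA a x
  -- `X` is a right `B`-module
  smulB_add : ∀ x y b, smulB (x + y) b = smulB x b + smulB y b
  smulB_add' : ∀ x b b', smulB x (b + b') = smulB x b + smulB x b'
  smulB_mul : ∀ x b b', smulB x (b * b') = smulB (smulB x b) b'
  smulB_smul : ∀ (c : ℂ) x b, smulB x (c • b) = c • smulB x b
  smulB_smul' : ∀ (c : ℂ) x b, smulB (c • x) b = c • smulB x b
  -- the two actions commute
  smul_commutes : ∀ a x b, smulB (smulA a x) b = smulA a (smulB x b)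
  -- the `A`-valued inner product (linear in the first variable)
  innA_add : ∀ x y z, innA (x + y) z = innA x z + innA y z
  innA_add' : ∀ x y z, innA x (y + z) = innA x y + innA x z
  innA_smul : ∀ (c : ℂ) x y, innA (c • x) y = c • innA x y
  innA_star : ∀ x y, star (innA x y) = innA y x
  innA_smulA : ∀ a x y, innA (smulA a x) y = a * innA x y
  innA_pos : ∀ x, ∃ a, innA x x = star a * a
  innA_definite : ∀ x, innA x x = 0 → x = 0
  -- the `B`-valued inner product (linear in the second variable)
  innB_add : ∀ x y z, innB (x + y) z = innB x z + innB y z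
  innB_add' : ∀ x y z, innB x (y + z) = innB x y + innB x z
  innB_smul : ∀ (c : ℂ) x y, innB x (c • y) = c • innB x y
  innB_star : ∀ x y, star (innB x y) = innB y x
  innB_smulB : ∀ x y b, innB x (smulB y b) = innB x y * b
  innB_pos : ∀ x, ∃ b, innB x x = star b * b
  innB_definite : ∀ x, innB x x = 0 → x = 0
  -- the norm on `X` is the Hilbert-module norm for both inner products
  norm_innA : ∀ x, ‖x‖ ^ 2 = ‖innA x x‖
  norm_innB : ∀ x, ‖x‖ ^ 2 = ‖innB x x‖
  -- fullness of both inner products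
  full_innA : closure (Submodule.span ℂ {a : A | ∃ x y, a = innA x y} : Set A) = Set.univ
  full_innB : closure (Submodule.span ℂ {b : B | ∃ x y, b = innB x y} : Set B) = Set.univ
  -- the imprimitivity condition `⟨x,y⟩_A ⬝ z = x ⬝ ⟨y,z⟩_B`
  imprimitivity : ∀ x y z, smulA (innA x y) z = smulB x (innB y z)

attribute [instance] ImprimitivityBimodule.nacg ImprimitivityBimodule.nsp
  ImprimitivityBimodule.cs
/-- A realization of the induced representation `X-Ind π` of `A` on `X ⊗_B H`, given an
`A`–`B` imprimitivity bimodule `X` and a representation `π` of `B` on `H`.  The map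
`t x h = x ⊗ h` is bilinear, `B`-balanced, has dense range span, satisfies the pre-inner
product identity `(x ⊗ h | y ⊗ k) = (π(⟨y,x⟩_B) h | k)` (written below in Mathlib's
convention, where the inner product is conjugate-linear in the first variable), and
intertwines the `A`-actions: `(X-Ind π)(a)(x ⊗ h) = (a⬝x) ⊗ h`. -/
structure InducedRepWitness {A B : Type} [NonUnitalCStarAlgebra A] [NonUnitalCStarAlgebra B]
    (E : ImprimitivityBimodule A B) (ρ : CStarRep B) (ρ' : CStarRep A) : Type 1 where
  t : E.X → ρ.space.carrier → ρ'.space.carrier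
  t_add_left : ∀ x y h, t (x + y) h = t x h + t y h
  t_add_right : ∀ x h k, t x (h + k) = t x h + t x k
  t_smul_left : ∀ (c : ℂ) x h, t (c • x) h = c • t x h
  t_smul_right : ∀ (c : ℂ) x h, t x (c • h) = c • t x h
  t_balanced : ∀ x b h, t (E.smulB x b) h = t x (ρ.π b h)
  t_inner : ∀ x y h k, ⟪t y k, t x h⟫ = ⟪k, ρ.π (E.innB y x) h⟫
  t_dense : closure (Submodule.span ℂ {v : ρ'.space.carrier | ∃ x h, v = t x h} :
      Set ρ'.space.carrier) = Set.univ
  t_intertwine : ∀ a x h, ρ'.π a (t x h) = t (E.smulA a x) h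
/-- (Topological) irreducibility of a representation: it is non-zero and has no non-trivial
closed invariant subspaces. -/
def CStarRep.Irreducible {B : Type} [NonUnitalCStarAlgebra B] (ρ : CStarRep B) : Prop :=
  (∃ b, ρ.π b ≠ 0) ∧
    ∀ K : Submodule ℂ ρ.space.carrier, IsClosed (K : Set ρ.space.carrier) →
      (∀ b, ∀ x ∈ K, ρ.π b x ∈ K) → K = ⊥ ∨ K = ⊤

/-- The irreducible representations of `B`; together with the topology below this serves as
the spectrum `B̂` of `B` (all notions considered here are invariant under unitary
equivalence, so may be computed on representatives). -/
def IrrRep (B : Type) [NonUnitalCStarAlgebra B] : Type 1 := {ρ : CStarRep B // ρ.Irreducible}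

/-- The topology on the spectrum: the pullback along `π ↦ ker π` of the Jacobson (hull-kernel)
topology on `Prim B`; the sets `{π | π(b) ≠ 0}` form a subbasis for it. -/
instance (B : Type) [NonUnitalCStarAlgebra B] : TopologicalSpace (IrrRep B) :=
  TopologicalSpace.generateFrom {U | ∃ b : B, U = {ρ : IrrRep B | ρ.1.π b ≠ 0}}
/-- The rank of a bounded operator, as an element of `{0,1,2,...} ∪ {∞}`. -/
def opRank {H : Type} [NormedAddCommGroup H] [InnerProductSpace ℂ H] (T : H →L[ℂ] H) : ℕ∞ :=
  (Module.rank ℂ (LinearMap.range (T : H →ₗ[ℂ] H))).toENat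

/-- A bundled nonempty directed preorder, the index of a net. -/
structure DirectedIndex : Type 1 where
  ι : Type
  [pre : Preorder ι]
  [dir : IsDirected ι (· ≤ ·)]
  [ne : Nonempty ι]

attribute [instance] DirectedIndex.pre DirectedIndex.dir DirectedIndex.ne

/-- The upper multiplicity `M_U(σ, (σ_α))` of `σ ∈ B̂` relative to a net `(σ_α)` in `B̂`
having `σ` as a cluster point.  It is characterized by: `M_U(σ, (σ_α)) ≤ k` if and only if
there exists `b ∈ B` with `σ(b) ≠ 0` and `rank σ_α(b) ≤ k` eventually. -/
def upperMult {B : Type} [NonUnitalCStarAlgebra B] {ι : Type} [Preorder ι]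
    (σ : IrrRep B) (net : ι → IrrRep B) : ℕ∞ :=
  sInf {k : ℕ∞ | ∃ b : B, σ.1.π b ≠ 0 ∧
    ∀ᶠ α in Filter.atTop, opRank ((net α).1.π b) ≤ k}

/-- The lower multiplicity `M_L(σ, (σ_α))`: the minimum of `M_U(σ, (σ_{α_i}))` over all
subnets `(σ_{α_i})` of `(σ_α)`. -/
def lowerMult {B : Type} [NonUnitalCStarAlgebra B] {ι : Type} [Preorder ι]
    (σ : IrrRep B) (net : ι → IrrRep B) : ℕ∞ :=
  sInf {m : ℕ∞ | ∃ (D : DirectedIndex) (φ : D.ι → ι),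
    Filter.Tendsto φ Filter.atTop Filter.atTop ∧ m = upperMult σ (net ∘ φ)}

/-- Unitary equivalence of representations. -/
def UEquiv {B : Type} [NonUnitalCStarAlgebra B] (ρ₁ ρ₂ : CStarRep B) : Prop :=
  ∃ U : ρ₁.space.carrier ≃ₗᵢ[ℂ] ρ₂.space.carrier, ∀ b x, U (ρ₁.π b x) = ρ₂.π b (U x)

/-- The (absolute) upper multiplicity `M_U(σ)`: the supremum of `M_U(σ, (σ_α))` over all nets
`(σ_α)` in `B̂` converging to `σ`. -/
def upperMultAbs {B : Type} [NonUnitalCStarAlgebra B] (σ : IrrRep B) : ℕ∞ :=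
  sSup {m : ℕ∞ | ∃ (D : DirectedIndex) (net : D.ι → IrrRep B),
    Filter.Tendsto net Filter.atTop (nhds σ) ∧ m = upperMult σ net}

/-- The (absolute) lower multiplicity `M_L(σ)`, defined when the (unitary equivalence class
of) `σ` is not open in `B̂`: the infimum of `M_L(σ, (σ_α))` over all nets `(σ_α)` in
`B̂ \ {σ}` converging to `σ`. -/
def lowerMultAbs {B : Type} [NonUnitalCStarAlgebra B] (σ : IrrRep B) : ℕ∞ :=
  sInf {m : ℕ∞ | ∃ (D : DirectedIndex) (net : D.ι → IrrRep B),
    (∀ α, ¬ UEquiv (net α).1 σ.1) ∧ Filter.Tendsto net Filter.atTop (nhds σ) ∧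
    m = lowerMult σ net}
section Statement11Aux

open scoped CStarAlgebra ComplexInnerProductSpace
open ContinuousLinearMap

private lemma linearMap_eqZero_of_dense {M N : Type} [NormedAddCommGroup M] [NormedSpace ℂ M]
    [NormedAddCommGroup N] [NormedSpace ℂ N] (L : M →ₗ[ℂ] N) (hL : Continuous L) (S : Set M)
    (hS : closure (Submodule.span ℂ S : Set M) = Set.univ) (h0 : ∀ s ∈ S, L s = 0) (m : M) :
    L m = 0 := by
  have h1 : Submodule.span ℂ S ≤ LinearMap.ker L := Submodule.span_le.2 fun s hs => h0 s hs
  have h2 : IsClosed (LinearMap.ker L : Set M) := by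
    have he : (LinearMap.ker L : Set M) = L ⁻¹' {0} := rfl
    rw [he]
    exact isClosed_singleton.preimage hL
  have h3 : (Set.univ : Set M) ⊆ (LinearMap.ker L : Set M) := by
    rw [← hS]; exact closure_minimal h1 h2
  exact h3 (Set.mem_univ m)

private lemma exists_mem_ne_zero_of_dense {M N : Type} [NormedAddCommGroup M] [NormedSpace ℂ M]
    [NormedAddCommGroup N] [NormedSpace ℂ N] (L : M →ₗ[ℂ] N) (hL : Continuous L) (S : Set M)
    (hS : closure (Submodule.span ℂ S : Set M) = Set.univ) (h : ∃ m, L m ≠ 0) :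
    ∃ s ∈ S, L s ≠ 0 := by
  by_contra hc; push_neg at hc
  obtain ⟨m, hm⟩ := h
  exact hm (linearMap_eqZero_of_dense L hL S hS hc m)

private lemma polarization_zero {X : Type} [AddCommGroup X] [Module ℂ X] (f : X → X → ℂ)
    (haddl : ∀ x y z, f (x + y) z = f x z + f y z)
    (haddr : ∀ x y z, f x (y + z) = f x y + f x z)
    (hsmull : ∀ (c : ℂ) x y, f (c • x) y = (starRingEnd ℂ) c * f x y)
    (hsmulr : ∀ (c : ℂ) x y, f x (c • y) = c * f x y)
    (hdiag : ∀ x, f x x = 0) (x y : X) : f x y = 0 := by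
  have e1 : f x y + f y x = 0 := by
    have h := hdiag (x + y)
    rw [haddl, haddr, haddr, hdiag, hdiag] at h
    linear_combination h
  have e2 : f x y = f y x := by
    have h := hdiag (x + Complex.I • y)
    rw [haddl, haddr, haddr, hdiag, hsmulr, hsmull, hsmull, hsmulr, hdiag] at h
    simp only [Complex.conj_I] at h
    have h' : Complex.I * (f x y - f y x) = 0 := by linear_combination h
    rcases mul_eq_zero.1 h' with h'' | h''
    · exact absurd h'' Complex.I_ne_zero
    · exact sub_eq_zero.1 h''
  have h2 : (2 : ℂ) * f x y = 0 := by linear_combination e1 + e2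
  exact (mul_eq_zero.1 h2).resolve_left two_ne_zero


private lemma opRank_comp_comp_le {H K : Type} [NormedAddCommGroup H] [InnerProductSpace ℂ H]
    [NormedAddCommGroup K] [InnerProductSpace ℂ K] (f : H →L[ℂ] K) (T : H →L[ℂ] H)
    (g : K →L[ℂ] H) : opRank (f.comp (T.comp g)) ≤ opRank T := by
  refine Cardinal.toENat.monotone' ?_
  show LinearMap.rank ((f.comp (T.comp g) : K →L[ℂ] K) : K →ₗ[ℂ] K) ≤
    LinearMap.rank ((T : H →L[ℂ] H) : H →ₗ[ℂ] H)
  have e : ((f.comp (T.comp g) : K →L[ℂ] K) : K →ₗ[ℂ] K) =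
      (f : H →ₗ[ℂ] K) ∘ₗ (((T : H →ₗ[ℂ] H)) ∘ₗ (g : K →ₗ[ℂ] H)) := rfl
  rw [e]
  exact le_trans (LinearMap.rank_comp_le_right _ _) (LinearMap.rank_comp_le_left _ _)

namespace InducedRepWitness

variable {A B : Type} [NonUnitalCStarAlgebra A] [NonUnitalCStarAlgebra B]
  {E : ImprimitivityBimodule A B} {ρ : CStarRep B} {ρ' : CStarRep A}

/-- `x ⊗ -` as a continuous linear map. -/
private noncomputable def tL (w : InducedRepWitness E ρ ρ') (x : E.X) :
    ρ.space.carrier →L[ℂ] ρ'.space.carrier :=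
  LinearMap.mkContinuous
    { toFun := w.t x
      map_add' := w.t_add_right x
      map_smul' := fun c h => w.t_smul_right c x h }
    (Real.sqrt ‖ρ.π (E.innB x x)‖)
    (fun h => by
      have h2 : ‖w.t x h‖ ^ 2 ≤ ‖ρ.π (E.innB x x)‖ * ‖h‖ ^ 2 := by
        have e1 : ((‖w.t x h‖ : ℂ)) ^ 2 = ⟪w.t x h, w.t x h⟫ :=
          (inner_self_eq_norm_sq_to_K (w.t x h)).symm
        rw [w.t_inner] at e1
        calc ‖w.t x h‖ ^ 2 = ‖((‖w.t x h‖ : ℂ) ^ 2)‖ := by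
              rw [norm_pow, Complex.norm_real, norm_norm]
          _ = ‖(⟪h, ρ.π (E.innB x x) h⟫ : ℂ)‖ := by rw [e1]
          _ ≤ ‖h‖ * ‖ρ.π (E.innB x x) h‖ := norm_inner_le_norm _ _
          _ ≤ ‖h‖ * (‖ρ.π (E.innB x x)‖ * ‖h‖) :=
              mul_le_mul_of_nonneg_left ((ρ.π (E.innB x x)).le_opNorm h) (norm_nonneg _)
          _ = ‖ρ.π (E.innB x x)‖ * ‖h‖ ^ 2 := by ring
      calc ‖w.t x h‖ = Real.sqrt (‖w.t x h‖ ^ 2) := (Real.sqrt_sq (norm_nonneg _)).symm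
        _ ≤ Real.sqrt (‖ρ.π (E.innB x x)‖ * ‖h‖ ^ 2) := Real.sqrt_le_sqrt h2
        _ = Real.sqrt ‖ρ.π (E.innB x x)‖ * ‖h‖ := by
              rw [Real.sqrt_mul (norm_nonneg _), Real.sqrt_sq (norm_nonneg _)])

@[simp] private lemma tL_apply (w : InducedRepWitness E ρ ρ') (x : E.X) (h : ρ.space.carrier) :
    w.tL x h = w.t x h := rfl

private lemma adjoint_tL_apply (w : InducedRepWitness E ρ ρ') (y z : E.X)
    (h : ρ.space.carrier) :
    ContinuousLinearMap.adjoint (w.tL y) (w.t z h) = ρ.π (E.innB y z) h := by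
  apply ext_inner_right ℂ
  intro k
  rw [ContinuousLinearMap.adjoint_inner_left]
  calc (⟪w.t z h, w.tL y k⟫ : ℂ) = ⟪w.t z h, w.t y k⟫ := by rw [tL_apply]
    _ = (starRingEnd ℂ) ⟪w.t y k, w.t z h⟫ := (inner_conj_symm _ _).symm
    _ = (starRingEnd ℂ) ⟪k, ρ.π (E.innB y z) h⟫ := by rw [w.t_inner]
    _ = ⟪ρ.π (E.innB y z) h, k⟫ := inner_conj_symm _ _

private lemma innB_op (w : InducedRepWitness E ρ ρ') (a : A) (x y : E.X) :
    ρ.π (E.innB y (E.smulA a x)) =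
      (ContinuousLinearMap.adjoint (w.tL y)).comp ((ρ'.π a).comp (w.tL x)) := by
  ext h
  simp only [ContinuousLinearMap.comp_apply, tL_apply]
  rw [w.t_intertwine, w.adjoint_tL_apply]

private lemma innA_op (w : InducedRepWitness E ρ ρ') (b : B) (x y : E.X) :
    ρ'.π (E.innA (E.smulB x b) y) =
      (w.tL x).comp ((ρ.π b).comp (ContinuousLinearMap.adjoint (w.tL y))) := by
  set T₁ := ρ'.π (E.innA (E.smulB x b) y) with hT₁
  set T₂ := (w.tL x).comp ((ρ.π b).comp (ContinuousLinearMap.adjoint (w.tL y))) with hT₂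
  have hgen : ∀ s ∈ {v : ρ'.space.carrier | ∃ z h, v = w.t z h},
      (((T₁ - T₂ : ρ'.space.carrier →L[ℂ] ρ'.space.carrier) : ρ'.space.carrier →ₗ[ℂ] ρ'.space.carrier)) s = 0 := by
    rintro s ⟨z, h, rfl⟩
    show T₁ (w.t z h) - T₂ (w.t z h) = 0
    have e1 : T₁ (w.t z h) = w.t x (ρ.π b (ρ.π (E.innB y z) h)) := by
      rw [hT₁, w.t_intertwine, E.imprimitivity, w.t_balanced, w.t_balanced]
    have e2 : T₂ (w.t z h) = w.t x (ρ.π b (ρ.π (E.innB y z) h)) := by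
      rw [hT₂]
      simp only [ContinuousLinearMap.comp_apply, tL_apply]
      rw [w.adjoint_tL_apply]
    rw [e1, e2, sub_self]
  have hz : ∀ v, (((T₁ - T₂ : ρ'.space.carrier →L[ℂ] ρ'.space.carrier) : ρ'.space.carrier →ₗ[ℂ] ρ'.space.carrier)) v = 0 := fun v =>
    linearMap_eqZero_of_dense _ (T₁ - T₂).continuous _ w.t_dense hgen v
  ext v
  have hv := hz v
  simp only [ContinuousLinearMap.coe_coe, ContinuousLinearMap.sub_apply] at hv
  exact sub_eq_zero.1 hv


private lemma exists_innB_ne_zero (w : InducedRepWitness E ρ ρ') (a : A)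
    (ha : ρ'.π a ≠ 0) : ∃ x y : E.X, ρ.π (E.innB y (E.smulA a x)) ≠ 0 := by
  obtain ⟨s, ⟨x, h, rfl⟩, hs⟩ :
      ∃ s ∈ {v : ρ'.space.carrier | ∃ x h, v = w.t x h},
        ((ρ'.π a : ρ'.space.carrier →ₗ[ℂ] ρ'.space.carrier)) s ≠ 0 := by
    refine exists_mem_ne_zero_of_dense _ (ρ'.π a).continuous _ w.t_dense ?_
    by_contra hc; push_neg at hc
    exact ha (ContinuousLinearMap.ext fun v => by simpa using hc v)
  set v0 := ρ'.π a (w.t x h) with hv0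
  have hs' : v0 ≠ 0 := hs
  obtain ⟨s, ⟨y, k, rfl⟩, hyk⟩ :
      ∃ s ∈ {v : ρ'.space.carrier | ∃ x h, v = w.t x h},
        ((innerSL ℂ v0 : ρ'.space.carrier →ₗ[ℂ] ℂ)) s ≠ 0 := by
    refine exists_mem_ne_zero_of_dense _ (innerSL ℂ v0).continuous _ w.t_dense ?_
    exact ⟨v0, by show (⟪v0, v0⟫ : ℂ) ≠ 0; exact inner_self_ne_zero.2 hs'⟩
  refine ⟨x, y, fun h0 => hyk ?_⟩
  show (⟪v0, w.t y k⟫ : ℂ) = 0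
  have hz : (⟪w.t y k, v0⟫ : ℂ) = 0 := by
    rw [hv0, w.t_intertwine, w.t_inner, h0]
    simp
  rw [← inner_conj_symm, hz, map_zero]

private lemma exists_innA_ne_zero (hirr : ρ.Irreducible) (w : InducedRepWitness E ρ ρ')
    (b : B) (hb : ρ.π b ≠ 0) : ∃ x y : E.X, ρ'.π (E.innA (E.smulB x b) y) ≠ 0 := by
  have hcont : ∀ h : ρ.space.carrier, Continuous (fun c : B => ρ.π c h) := by
    intro h
    exact (ContinuousLinearMap.apply ℂ ρ.space.carrier h).continuous.comp (map_continuous ρ.π)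
  -- the span of vectors `ρ(⟨y,z⟩_B) h`
  set Ksub : Submodule ℂ ρ.space.carrier :=
    Submodule.span ℂ {v : ρ.space.carrier | ∃ y z h, v = ρ.π (E.innB y z) h} with hKsub
  set K := Ksub.topologicalClosure with hK
  have hmul : ∀ (c : B) (y z : E.X), c * E.innB y z = E.innB (E.smulB y (star c)) z := by
    intro c y z
    calc c * E.innB y z = star (star (E.innB y z) * star c) := by
          rw [star_mul, star_star, star_star]
      _ = star (E.innB z y * star c) := by rw [E.innB_star]
      _ = star (E.innB z (E.smulB y (star c))) := by rw [E.innB_smulB]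
      _ = E.innB (E.smulB y (star c)) z := E.innB_star _ _
  have hinv : ∀ c : B, ∀ v ∈ K, ρ.π c v ∈ K := by
    intro c v hv
    have hmap : ∀ u ∈ Ksub, ρ.π c u ∈ Ksub := by
      intro u hu
      have : Submodule.map ((ρ.π c : ρ.space.carrier →ₗ[ℂ] ρ.space.carrier)) Ksub ≤ Ksub := by
        rw [hKsub, Submodule.map_span_le]
        rintro _ ⟨y, z, h, rfl⟩
        refine Submodule.subset_span ⟨E.smulB y (star c), z, h, ?_⟩
        show ρ.π c (ρ.π (E.innB y z) h) = _
        rw [← ContinuousLinearMap.mul_apply, ← map_mul, hmul]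
      exact this ⟨u, hu, rfl⟩
    have hv' : v ∈ closure (Ksub : Set ρ.space.carrier) := by
      rw [← Submodule.topologicalClosure_coe]; exact hv
    have h1 : ρ.π c '' (Ksub : Set ρ.space.carrier) ⊆ (Ksub : Set ρ.space.carrier) := by
      rintro _ ⟨u, hu, rfl⟩; exact hmap u hu
    have h2 : ρ.π c v ∈ closure (ρ.π c '' (Ksub : Set ρ.space.carrier)) :=
      image_closure_subset_closure_image (ρ.π c).continuous (Set.mem_image_of_mem _ hv')
    have h3 : ρ.π c v ∈ closure (Ksub : Set ρ.space.carrier) := closure_mono h1 h2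
    rw [← Submodule.topologicalClosure_coe] at h3
    exact h3
  rcases hirr.2 K (Submodule.isClosed_topologicalClosure Ksub) hinv with hbot | htop
  · exfalso
    have hgen0 : ∀ (y z : E.X) (h : ρ.space.carrier), ρ.π (E.innB y z) h = 0 := by
      intro y z h
      have hm : ρ.π (E.innB y z) h ∈ K :=
        Ksub.le_topologicalClosure (Submodule.subset_span ⟨y, z, h, rfl⟩)
      rw [hbot] at hm
      simpa using hm
    have hall : ∀ (c : B) (h : ρ.space.carrier), ρ.π c h = 0 := by
      intro c h
      let L1 : B →ₗ[ℂ] ρ.space.carrier :=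
        { toFun := fun c => ρ.π c h
          map_add' := fun c c' => by simp [map_add]
          map_smul' := fun r c => by simp [map_smul] }
      refine linearMap_eqZero_of_dense L1 (hcont h) _ E.full_innB ?_ c
      rintro _ ⟨x, y, rfl⟩
      exact hgen0 x y h
    exact hb (ContinuousLinearMap.ext fun h => by rw [hall b h]; simp)
  · have hdense : closure (Ksub : Set ρ.space.carrier) = Set.univ := by
      rw [← Submodule.topologicalClosure_coe, ← hK, htop]
      simp
    obtain ⟨s, ⟨y, z, h, rfl⟩, hs⟩ :
        ∃ s ∈ {v : ρ.space.carrier | ∃ y z h, v = ρ.π (E.innB y z) h},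
          ((ρ.π b : ρ.space.carrier →ₗ[ℂ] ρ.space.carrier)) s ≠ 0 := by
      refine exists_mem_ne_zero_of_dense _ (ρ.π b).continuous _ hdense ?_
      by_contra hc; push_neg at hc
      exact hb (ContinuousLinearMap.ext fun v => by simpa using hc v)
    set u := ρ.π b (ρ.π (E.innB y z) h) with hu
    have hu0 : u ≠ 0 := hs
    have hx : ∃ x : E.X, w.t x u ≠ 0 := by
      by_contra hcx; push_neg at hcx
      have hdiag : ∀ x : E.X, (⟪u, ρ.π (E.innB x x) u⟫ : ℂ) = 0 := by
        intro x
        have hti := w.t_inner x x u u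
        rw [hcx x] at hti
        simpa using hti.symm
      have hsmulleft : ∀ (c : ℂ) (x y' : E.X),
          E.innB (c • x) y' = (starRingEnd ℂ) c • E.innB x y' := by
        intro c x y'
        calc E.innB (c • x) y' = star (E.innB y' (c • x)) := (E.innB_star y' (c • x)).symm
          _ = star (c • E.innB y' x) := by rw [E.innB_smul]
          _ = (starRingEnd ℂ) c • star (E.innB y' x) := by
              rw [star_smul]; rfl
          _ = (starRingEnd ℂ) c • E.innB x y' := by rw [E.innB_star]
      have hf : ∀ x y' : E.X, (⟪u, ρ.π (E.innB x y') u⟫ : ℂ) = 0 := by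
        refine polarization_zero (fun x y' => (⟪u, ρ.π (E.innB x y') u⟫ : ℂ)) ?_ ?_ ?_ ?_ hdiag
        · intro x y' z'
          show (⟪u, ρ.π (E.innB (x + y') z') u⟫ : ℂ) = _ + _
          rw [E.innB_add, map_add, ContinuousLinearMap.add_apply, inner_add_right]
        · intro x y' z'
          show (⟪u, ρ.π (E.innB x (y' + z')) u⟫ : ℂ) = _ + _
          rw [E.innB_add', map_add, ContinuousLinearMap.add_apply, inner_add_right]
        · intro c x y'
          show (⟪u, ρ.π (E.innB (c • x) y') u⟫ : ℂ) = _
          rw [hsmulleft, map_smul, ContinuousLinearMap.smul_apply, inner_smul_right]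
        · intro c x y'
          show (⟪u, ρ.π (E.innB x (c • y')) u⟫ : ℂ) = _
          rw [E.innB_smul, map_smul, ContinuousLinearMap.smul_apply, inner_smul_right]
      have hallc : ∀ c : B, (⟪u, ρ.π c u⟫ : ℂ) = 0 := by
        let L2 : B →ₗ[ℂ] ℂ :=
          { toFun := fun c => (⟪u, ρ.π c u⟫ : ℂ)
            map_add' := fun c c' => by
              simp [map_add, ContinuousLinearMap.add_apply, inner_add_right]
            map_smul' := fun r c => by
              simp [map_smul, ContinuousLinearMap.smul_apply, inner_smul_right] }
        have hc2 : Continuous L2 := by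
          have he : (fun c : B => (⟪u, ρ.π c u⟫ : ℂ)) =
              (fun v : ρ.space.carrier => (⟪u, v⟫ : ℂ)) ∘ (fun c : B => ρ.π c u) := rfl
          show Continuous fun c : B => (⟪u, ρ.π c u⟫ : ℂ)
          rw [he]
          exact (innerSL ℂ u).continuous.comp (hcont u)
        refine fun c => linearMap_eqZero_of_dense L2 hc2 _ E.full_innB ?_ c
        rintro _ ⟨x, y', rfl⟩
        exact hf x y'
      have hzero : ∀ c : B, ρ.π c u = 0 := by
        intro c
        have h2 := hallc (star c * c)
        rw [map_mul, ContinuousLinearMap.mul_apply, map_star,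
          ContinuousLinearMap.star_eq_adjoint,
          ContinuousLinearMap.adjoint_inner_right] at h2
        exact inner_self_eq_zero.1 h2
      have hperp : ∀ s ∈ {v : ρ.space.carrier | ∃ y z h, v = ρ.π (E.innB y z) h},
          ((innerSL ℂ u : ρ.space.carrier →ₗ[ℂ] ℂ)) s = 0 := by
        rintro _ ⟨y', z', h', rfl⟩
        show (⟪u, ρ.π (E.innB y' z') h'⟫ : ℂ) = 0
        rw [← ContinuousLinearMap.adjoint_inner_left, ← ContinuousLinearMap.star_eq_adjoint,
          ← map_star, hzero]
        simp
      have huu : (⟪u, u⟫ : ℂ) = 0 :=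
        linearMap_eqZero_of_dense _ (innerSL ℂ u).continuous _ hdense hperp u
      exact hu0 (inner_self_eq_zero.1 huu)
    obtain ⟨x, hx⟩ := hx
    refine ⟨x, y, fun h0 => hx ?_⟩
    have e : w.t x u = ρ'.π (E.innA (E.smulB x b) y) (w.t z h) := by
      rw [w.innA_op]
      simp only [ContinuousLinearMap.comp_apply, tL_apply]
      rw [w.adjoint_tL_apply, ← hu]
    rw [e, h0]
    simp

end InducedRepWitness


private lemma upperMult_ind_eq {A B : Type} [NonUnitalCStarAlgebra A] [NonUnitalCStarAlgebra B]
    (E : ImprimitivityBimodule A B) (Ind : IrrRep B → IrrRep A)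
    (hInd : ∀ σ : IrrRep B, Nonempty (InducedRepWitness E σ.1 (Ind σ).1))
    {ι : Type} [Preorder ι] (σ : IrrRep B) (ν : ι → IrrRep B) :
    upperMult (Ind σ) (fun α => Ind (ν α)) = upperMult σ ν := by
  unfold upperMult
  congr 1
  ext k
  simp only [Set.mem_setOf_eq]
  constructor
  · rintro ⟨a, ha, hev⟩
    obtain ⟨w⟩ := hInd σ
    obtain ⟨x, y, hxy⟩ := w.exists_innB_ne_zero a ha
    refine ⟨E.innB y (E.smulA a x), hxy, hev.mono fun α hα => ?_⟩
    obtain ⟨wα⟩ := hInd (ν α)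
    rw [wα.innB_op a x y]
    exact le_trans (opRank_comp_comp_le _ _ _) hα
  · rintro ⟨b, hb, hev⟩
    obtain ⟨w⟩ := hInd σ
    obtain ⟨x, y, hxy⟩ := InducedRepWitness.exists_innA_ne_zero σ.2 w b hb
    refine ⟨E.innA (E.smulB x b) y, hxy, hev.mono fun α hα => ?_⟩
    obtain ⟨wα⟩ := hInd (ν α)
    rw [wα.innA_op b x y]
    exact le_trans (opRank_comp_comp_le _ _ _) hα

end Statement11Aux

/-- Let `X` be an `A`–`B` imprimitivity bimodule, let `π ∈ B̂`, and let
`(π_α)` be a net in `B̂` with `π` as a cluster point.  Then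
`M_L(π, (π_α)) = M_L(X-Ind π, (X-Ind π_α))`. -/
theorem lowerMult_inducedRep {A B : Type}
    [NonUnitalCStarAlgebra A] [NonUnitalCStarAlgebra B]
    (E : ImprimitivityBimodule A B)
    (Ind : IrrRep B → IrrRep A)
    (hInd : ∀ σ : IrrRep B, Nonempty (InducedRepWitness E σ.1 (Ind σ).1))
    {ι : Type} [Preorder ι] [IsDirected ι (· ≤ ·)] [Nonempty ι]
    (π : IrrRep B) (net : ι → IrrRep B)
    (hcluster : MapClusterPt π Filter.atTop net) :
    lowerMult π net = lowerMult (Ind π) (fun α => Ind (net α)) := by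
  unfold lowerMult
  congr 1
  ext m
  simp only [Set.mem_setOf_eq]
  constructor
  · rintro ⟨D, φ, hφ, rfl⟩
    exact ⟨D, φ, hφ, (upperMult_ind_eq E Ind hInd π (net ∘ φ)).symm⟩
  · rintro ⟨D, φ, hφ, rfl⟩
    exact ⟨D, φ, hφ, (upperMult_ind_eq E Ind hInd π (net ∘ φ))⟩
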